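/- If (τ, η) is an outer-twist of ρ, then (τ⁻¹, τ⁻¹∘η) is an outer-twist of ρ, where τ⁻¹∘η is the character g ↦ τ⁻¹(η(g)). (Closure of the set of extra-twists under inversion, part of the group structure in the paper's Lemma on basic properties of extra-twists.) -/
import Mathlib


/- Setting: `G` a group, `k` a commutative ring, representations `G → GLₙ(k)`. -/

open Matrix

variable {G k : Type*} [Group G] [CommRing k] {n : ℕ}

/-- Two `GL n k`-valued functions are conjugate if they differ by conjugation by a
fixed element `α` of `GLₙ(k)`. -/
def ConjRep (ρ₁ ρ₂ : G → GL (Fin n) k) : Prop :=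
  ∃ α : GL (Fin n) k, ∀ g, ρ₂ g = α * ρ₁ g * α⁻¹

/-- The twist `ρ ⊗ χ` of `ρ` by a character `χ`, `g ↦ χ(g) • ρ(g)`. -/
def twistRep (ρ : G → GL (Fin n) k) (χ : G →* kˣ) : G → GL (Fin n) k :=
  fun g => χ g • ρ g

/-- The transpose of an element of `GLₙ(k)`. -/
def GLtranspose (A : GL (Fin n) k) : GL (Fin n) k where
  val := (A : Matrix (Fin n) (Fin n) k)ᵀ
  inv := ((A⁻¹ : GL (Fin n) k) : Matrix (Fin n) (Fin n) k)ᵀ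
  val_inv := by
    rw [← Matrix.transpose_mul]
    have : ((A⁻¹ : GL (Fin n) k) : Matrix (Fin n) (Fin n) k) *
        (A : Matrix (Fin n) (Fin n) k) = 1 := by
      simp [congrArg Units.val (inv_mul_cancel A)]
    rw [this, Matrix.transpose_one]
  inv_val := by
    rw [← Matrix.transpose_mul]
    have : (A : Matrix (Fin n) (Fin n) k) *
        ((A⁻¹ : GL (Fin n) k) : Matrix (Fin n) (Fin n) k) = 1 := by
      simp [congrArg Units.val (mul_inv_cancel A)]
    rw [this, Matrix.transpose_one]

/-- The dual `ρ^∨` (inverse-transpose) of a representation, `g ↦ (ρ(g)⁻¹)ᵀ`. -/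
def dualRep (ρ : G → GL (Fin n) k) : G → GL (Fin n) k :=
  fun g => GLtranspose (ρ g)⁻¹

/-- Entrywise application of the ring automorphism `σ` to `ρ`, i.e. `ˢρ`. -/
def sigmaRep (σ : RingAut k) (ρ : G → GL (Fin n) k) : G → GL (Fin n) k :=
  fun g => Matrix.GeneralLinearGroup.map σ (ρ g)

/-- The character `σ ∘ χ`, `g ↦ σ(χ(g))`. -/
def sigmaChar (σ : RingAut k) (χ : G →* kˣ) : G →* kˣ :=
  (Units.map σ.toRingHom.toMonoidHom).comp χ

/-- `(σ, χ)` is an inner-twist of `ρ` : `ˢρ` is conjugate to `ρ ⊗ χ`. -/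
def IsInnerTwist (ρ : G →* GL (Fin n) k) (σ : RingAut k) (χ : G →* kˣ) : Prop :=
  ConjRep (sigmaRep σ ρ) (twistRep ρ χ)

/-- `(τ, η)` is an outer-twist of `ρ` : `ᵗρ` is conjugate to `ρ^∨ ⊗ η`. -/
def IsOuterTwist (ρ : G →* GL (Fin n) k) (τ : RingAut k) (η : G →* kˣ) : Prop :=
  ConjRep (sigmaRep τ ρ) (twistRep (dualRep ρ) η)

/-- `ρ` is non-self-twist: any character by which `ρ` is a twist of itself is trivial. -/
def NonSelfTwist (ρ : G →* GL (Fin n) k) : Prop :=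
  ∀ χ : G →* kˣ, ConjRep (⇑ρ) (twistRep ρ χ) → χ = 1

/-- `ρ` is non-essentially-self-dual: `ρ` is not conjugate to any character twist
of its dual. -/
def NonEssSelfDual (ρ : G →* GL (Fin n) k) : Prop :=
  ¬ ∃ η : G →* kˣ, ConjRep (⇑ρ) (twistRep (dualRep ρ) η)

lemma GLsmul_inv (u : kˣ) (A : GL (Fin n) k) : (u • A)⁻¹ = u⁻¹ • A⁻¹ := rfl
lemma GLs1 (u : kˣ) (A B : GL (Fin n) k) : u • A * B = u • (A * B) :=
  Units.ext (smul_mul_assoc (u : k) (A : Matrix (Fin n) (Fin n) k) (B : Matrix (Fin n) (Fin n) k))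
lemma GLs2 (u : kˣ) (A B : GL (Fin n) k) : A * (u • B) = u • (A * B) :=
  Units.ext (mul_smul_comm (u : k) (A : Matrix (Fin n) (Fin n) k) (B : Matrix (Fin n) (Fin n) k))
lemma GLs3 (u v : kˣ) (A : GL (Fin n) k) : u • v • A = (u * v) • A :=
  Units.ext (smul_smul (u : k) (v : k) (A : Matrix (Fin n) (Fin n) k))
lemma GLt_inv (A : GL (Fin n) k) : (GLtranspose A)⁻¹ = GLtranspose A⁻¹ := Units.ext rfl
lemma GLt_mul (A B : GL (Fin n) k) : GLtranspose (A * B) = GLtranspose B * GLtranspose A :=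
  Units.ext (Matrix.transpose_mul _ _)
lemma GLt_GLt (A : GL (Fin n) k) : GLtranspose (GLtranspose A) = A :=
  Units.ext (Matrix.transpose_transpose (A : Matrix (Fin n) (Fin n) k))
lemma GLt_smul (u : kˣ) (A : GL (Fin n) k) : GLtranspose (u • A) = u • GLtranspose A :=
  Units.ext (Matrix.transpose_smul (u : k) (A : Matrix (Fin n) (Fin n) k))
lemma GLt_map (σ : RingAut k) (A : GL (Fin n) k) :
    GLtranspose (Matrix.GeneralLinearGroup.map (σ : k →+* k) A) =
    Matrix.GeneralLinearGroup.map (σ : k →+* k) (GLtranspose A) := Units.ext rfl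
lemma map_smul'' (σ : RingAut k) (u : kˣ) (A : GL (Fin n) k) :
    Matrix.GeneralLinearGroup.map (σ : k →+* k) (u • A) =
    (Units.map σ.toRingHom.toMonoidHom u) • Matrix.GeneralLinearGroup.map (σ : k →+* k) A := by
  apply Units.ext
  show ((u:k) • (A : Matrix (Fin n) (Fin n) k)).map σ
      = (σ (u:k)) • ((A : Matrix (Fin n) (Fin n) k)).map σ
  exact Matrix.map_smul' _ _ _ (map_mul σ)
lemma map_map'' (σ : RingAut k) (A : GL (Fin n) k) :
    Matrix.GeneralLinearGroup.map ((σ⁻¹ : RingAut k) : k →+* k)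
      (Matrix.GeneralLinearGroup.map (σ : k →+* k) A) = A := by
  apply Units.ext
  show ((A : Matrix (Fin n) (Fin n) k).map σ).map ⇑(σ⁻¹ : RingAut k) = _
  rw [Matrix.map_map]
  have : ⇑(σ⁻¹ : RingAut k) ∘ ⇑σ = id := by
    funext x; exact σ.symm_apply_apply x
  rw [this, Matrix.map_id]


/-- the inverse of an outer-twist `(τ, η)` is the outer-twist
`(τ⁻¹, τ⁻¹∘η)`. -/
theorem outer_twist_inv
    (hn : 1 ≤ n) (ρ : G →* GL (Fin n) k)
    (τ : RingAut k) (η : G →* kˣ)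
    (hτ : IsOuterTwist ρ τ η) :
    IsOuterTwist ρ τ⁻¹ (sigmaChar τ⁻¹ η) := by
  obtain ⟨α, h⟩ := hτ
  refine ⟨Matrix.GeneralLinearGroup.map ((τ⁻¹ : RingAut k) : k →+* k) (GLtranspose α),
    fun g => ?_⟩
  have h0 : η g • GLtranspose (ρ g)⁻¹
      = α * Matrix.GeneralLinearGroup.map (τ : k →+* k) (ρ g) * α⁻¹ := h g
  have h1 : Matrix.GeneralLinearGroup.map (τ : k →+* k) (ρ g)
      = α⁻¹ * (η g • GLtranspose (ρ g)⁻¹) * α := by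
    rw [h0]; group
  have h2 : ρ g = Matrix.GeneralLinearGroup.map ((τ⁻¹ : RingAut k) : k →+* k) α⁻¹ *
      ((Units.map (τ⁻¹ : RingAut k).toRingHom.toMonoidHom (η g)) •
        Matrix.GeneralLinearGroup.map ((τ⁻¹ : RingAut k) : k →+* k) (GLtranspose (ρ g)⁻¹)) *
      Matrix.GeneralLinearGroup.map ((τ⁻¹ : RingAut k) : k →+* k) α := by
    have := congrArg (Matrix.GeneralLinearGroup.map ((τ⁻¹ : RingAut k) : k →+* k)) h1
    rwa [map_map'', _root_.map_mul, _root_.map_mul, map_smul''] at this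
  set c := Units.map (τ⁻¹ : RingAut k).toRingHom.toMonoidHom (η g) with hc
  have h3 := congrArg (fun X => GLtranspose X⁻¹) h2
  simp only [GLsmul_inv, _root_.map_inv, _root_.mul_inv_rev, inv_inv, GLt_mul, GLt_smul,
    GLt_map, GLt_GLt, ← GLt_inv] at h3
  show c • GLtranspose (ρ g)⁻¹ = _
  rw [← GLt_inv, h3]
  show _ = _ * Matrix.GeneralLinearGroup.map ((τ⁻¹ : RingAut k) : k →+* k) (ρ g) * _
  rw [GLs2, GLs1, GLs3, mul_inv_cancel, one_smul]
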